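/- arXiv:1605.02434 — 2 statements merged into one kernel-verified Lean document; each statement's English description precedes it below -/
import Mathlib

section
/- Let p be a prime, q a positive integer divisible by p, and l an integer. Define G̃ : ℂ → ℂ by G̃(s) := Σ_{(a,b)} e(a·l/q) · expZeta(b·p/q, s), the sum running over all pairs (a,b) with 1 ≤ a,b ≤ q and a·b ≡ 1 (mod q), where b·p/q is taken in ℝ/ℤ. Then: (i) for every s ∈ ℂ with Re s > 1, the series Σ_{n=1}^∞ Kl(l, n·p; q)/n^{s} converges absolutely and equals G̃(s); (ii) G̃ is complex differentiable at every point s ≠ 1. -/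
open Complex

/-- `e(z) = exp(2πiz)`. -/
noncomputable def eC (z : ℂ) : ℂ := Complex.exp (2 * Real.pi * Complex.I * z)

/-- The Kloosterman sum `Kl(m,n;c) = Σ_{x mod c, (x,c)=1} e((mx + nx*)/c)`,
where `x*` is the inverse of `x` modulo `c`. -/
noncomputable def Kl (m n : ℤ) (c : ℕ) : ℂ :=
  ∑ x ∈ Finset.filter (fun x => Nat.gcd x c = 1) (Finset.Icc 1 c),
    eC ((((m * x + n * ((((x : ZMod c))⁻¹.val : ℕ) : ℤ) : ℤ) : ℝ) / c : ℝ))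

/-- `G̃(s) = Σ_{1 ≤ a,b ≤ q, ab ≡ 1 (q)} e(al/q) expZeta(bp/q, s)`. -/
noncomputable def Gt (p q : ℕ) (l : ℤ) (s : ℂ) : ℂ :=
  ∑ a ∈ Finset.Icc 1 q, ∑ b ∈ Finset.Icc 1 q,
    if (a * b) % q = 1 % q then
      eC ((((a : ℤ) * l : ℤ) : ℝ) / q) *
        HurwitzZeta.expZeta ((((b * p : ℕ) : ℝ) / q : ℝ) : UnitAddCircle) s
    else 0

/-!
With `ψ = ZMod.stdAddChar` the additive character of `ZMod q`, the Kloosterman sum is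
`Kl(l, np; q) = Σ_{x unit} ψ(l x) ψ(n p x⁻¹)`, so the Dirichlet series splits into finitely many
series `Σ ψ(c n) n⁻ˢ = expZeta(c / q, s)`. In `G̃` the condition `ab ≡ 1` selects `b ≡ a⁻¹`, and
`expZeta(bp / q, s)` only depends on `b` modulo `q`, so `G̃` is the same finite combination.
Absolute convergence is free in the finite-dimensional space `ℂ`, and differentiability is
inherited from `expZeta` away from `s = 1`.
-/

open Finset ZMod HurwitzZeta

section

variable {q : ℕ} [NeZero q]

theorem ZMod.sum_Icc_natCast_eq_sum {M : Type*} [AddCommMonoid M] (g : ZMod q → M) :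
    ∑ b ∈ Icc 1 q, g b = ∑ y, g y := by
  have hq : 0 < q := NeZero.pos q
  calc ∑ b ∈ Icc 1 q, g b = ∑ i ∈ range q, g i := by
        rw [range_eq_Ico, ← Ico_insert_right hq, ← insert_Ico_add_one_left_eq_Ico hq,
          sum_insert right_notMem_Ico, sum_insert (by simp), natCast_self, Nat.cast_zero, zero_add]
    _ = ∑ y, g y :=
        sum_nbij' (↑) ZMod.val (by simp) (by simp [ZMod.val_lt])
          (fun i hi => ZMod.val_cast_of_lt (mem_range.1 hi)) (fun y _ => natCast_zmod_val y)
          (fun _ _ => rfl)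

theorem ZMod.sum_ite_mul_eq_one {M : Type*} [AddCommMonoid M] (a : ZMod q) (G : ZMod q → M) :
    ∑ y, (if a * y = 1 then G y else 0) = if IsUnit a then G a⁻¹ else 0 := by
  split_ifs with ha
  · have key : ∀ y, a * y = 1 ↔ a⁻¹ = y := fun y =>
      ⟨ZMod.inv_eq_of_mul_eq_one q a y, fun h => h ▸ mul_inv_of_unit a ha⟩
    simp only [key, sum_ite_eq, mem_univ, if_true]
  · exact sum_eq_zero fun y _ => if_neg fun h => ha (.of_mul_eq_one y h)

theorem eC_intCast_div (j : ℤ) : eC ((j : ℂ) / q) = stdAddChar (j : ZMod q) := by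
  rw [stdAddChar_coe, eC, mul_div_assoc]

theorem Kl_eq_sum_stdAddChar (m n : ℤ) :
    Kl m n q = ∑ x ∈ filter (fun x => x.gcd q = 1) (Icc 1 q),
      stdAddChar (m * x : ZMod q) * stdAddChar (n * (x : ZMod q)⁻¹ : ZMod q) := by
  refine sum_congr rfl fun x _ => ?_
  rw [← AddChar.map_add_eq_mul]
  convert eC_intCast_div (q := q) (m * x + n * ((x : ZMod q)⁻¹.val : ℤ)) using 2
  · push_cast; rfl
  · push_cast [natCast_zmod_val]; rfl

theorem Gt_eq_sum_expZeta (p : ℕ) (l : ℤ) (s : ℂ) :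
    Gt p q l s = ∑ x ∈ filter (fun x => x.gcd q = 1) (Icc 1 q),
      stdAddChar (x * l : ZMod q) * expZeta (toAddCircle ((x : ZMod q)⁻¹ * p : ZMod q)) s := by
  rw [Gt, sum_filter]
  refine sum_congr rfl fun a _ => ?_
  let F : ZMod q → ℂ := fun y =>
    stdAddChar (a * l : ZMod q) * expZeta (toAddCircle (y * p : ZMod q)) s
  calc _ = ∑ b ∈ Icc 1 q, if (a : ZMod q) * b = 1 then F b else 0 := by
        refine sum_congr rfl fun b _ => ?_
        have hab : (a * b) % q = 1 % q ↔ (a : ZMod q) * b = 1 := by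
          rw [← natCast_eq_natCast_iff']; push_cast; rfl
        simp only [hab, F]
        congr 2
        · simpa using eC_intCast_div (q := q) (a * l)
        · rw [← Nat.cast_mul, toAddCircle_natCast]
    _ = _ := by
        rw [sum_Icc_natCast_eq_sum (fun y => if (a : ZMod q) * y = 1 then F y else 0),
          sum_ite_mul_eq_one]
        exact if_congr (isUnit_iff_coprime a q) rfl rfl

theorem hasSum_stdAddChar_mul_div_cpow (c : ZMod q) {s : ℂ} (hs : 1 < s.re) :
    HasSum (fun n : ℕ => stdAddChar (c * (n + 1 : ℕ) : ZMod q) / ((n + 1 : ℕ) : ℂ) ^ s)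
      (expZeta (toAddCircle c) s) := by
  have hs1 : s ≠ 1 := by rintro rfl; simp at hs
  have h := (LSeriesSummable_of_one_lt_re (fun k => stdAddChar (c * k)) hs).LSeriesHasSum
  rw [LSeriesHasSum, ← LFunction_eq_LSeries (fun k => stdAddChar (c * k)) hs,
    LFunction_stdAddChar_eq_expZeta c s (.inr hs1), ← hasSum_nat_add_iff' 1] at h
  simpa [LSeries.term_zero, LSeries.term_of_ne_zero] using h

theorem hasSum_Kl_div_cpow (p : ℕ) (l : ℤ) {s : ℂ} (hs : 1 < s.re) :
    HasSum (fun n : ℕ => Kl l (((n : ℤ) + 1) * p) q / ((n + 1 : ℕ) : ℂ) ^ s) (Gt p q l s) := by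
  rw [Gt_eq_sum_expZeta]
  refine (hasSum_sum fun (x : ℕ) _ =>
    (hasSum_stdAddChar_mul_div_cpow ((x : ZMod q)⁻¹ * p : ZMod q) hs).mul_left
      (stdAddChar (x * l : ZMod q))).congr_fun fun n => ?_
  rw [Kl_eq_sum_stdAddChar, sum_div]
  refine sum_congr rfl fun x _ => ?_
  rw [mul_comm (l : ZMod q), mul_div_assoc]
  congr 3
  push_cast
  ring

theorem differentiableAt_Gt (p : ℕ) (l : ℤ) {s : ℂ} (hs : s ≠ 1) :
    DifferentiableAt ℂ (Gt p q l) s := by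
  rw [funext (Gt_eq_sum_expZeta p l)]
  exact .fun_sum fun x _ => (differentiableAt_const _).mul (differentiableAt_expZeta _ _ (.inl hs))

end

theorem stmt7_general (p q : ℕ) (hq : 0 < q) (l : ℤ) :
    (∀ s : ℂ, 1 < s.re →
      Summable (fun n : ℕ => ‖Kl l (((n : ℤ) + 1) * p) q / (((n : ℕ) + 1 : ℕ) : ℂ) ^ s‖) ∧
      ∑' n : ℕ, Kl l (((n : ℤ) + 1) * p) q / (((n : ℕ) + 1 : ℕ) : ℂ) ^ s = Gt p q l s) ∧
    (∀ s : ℂ, s ≠ 1 → DifferentiableAt ℂ (Gt p q l) s) := by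
  have : NeZero q := ⟨hq.ne'⟩
  refine ⟨fun s hs => ?_, fun s hs => differentiableAt_Gt p l hs⟩
  have h := hasSum_Kl_div_cpow (q := q) p l hs
  exact ⟨summable_norm_iff.2 h.summable, h.tsum_eq⟩

theorem stmt7 (p q : ℕ) (hp : p.Prime) (hq : 0 < q) (hpq : p ∣ q) (l : ℤ) :
    (∀ s : ℂ, 1 < s.re →
      Summable (fun n : ℕ => ‖Kl l (((n : ℤ) + 1) * p) q / (((n : ℕ) + 1 : ℕ) : ℂ) ^ s‖) ∧
      ∑' n : ℕ, Kl l (((n : ℤ) + 1) * p) q / (((n : ℕ) + 1 : ℕ) : ℂ) ^ s = Gt p q l s) ∧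
    (∀ s : ℂ, s ≠ 1 → DifferentiableAt ℂ (Gt p q l) s) :=
  stmt7_general p q hq l
end

section
/- Let m, n, c be positive integers and p a prime. If p² divides c, p divides m, and p does not divide n, then Kl(m,n;c) = 0. -/
/-!
With `ψ` the standard additive character of `ZMod c`, `Kl(m,n;c) = ∑_{x ∈ (ℤ/c)ˣ} ψ(m x⁻¹ + n x)`.
Put `t = c/p`: as `p² ∣ c` and `p ∣ m`, `t² = 0` and `m t = 0` in `ZMod c`. So `x ↦ x + t`
permutes the units, `(x + t)⁻¹ = x⁻¹ - x⁻² t`, and the substitution multiplies the sum by `ψ(n t)`.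
As `p ∤ n`, `n t ≠ 0`, hence `ψ(n t) ≠ 1` and the sum vanishes.
-/

open Complex

lemma Units.val_inv_of_val_eq_add_of_mul_self_eq_zero {R : Type*} [CommRing R] {t : R}
    (ht : t * t = 0) (u w : Rˣ) (hw : (w : R) = u + t) :
    (↑w⁻¹ : R) = ↑u⁻¹ - ↑u⁻¹ * ↑u⁻¹ * t := by
  refine Units.inv_eq_of_mul_eq_one_right ?_
  rw [hw]
  linear_combination (1 - (↑u⁻¹ : R) * t) * u.mul_inv - (↑u⁻¹ : R) * ↑u⁻¹ * ht

theorem sum_units_addChar_mul_add_mul_inv_eq_zero {R M : Type*} [CommRing R] [Fintype Rˣ]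
    [CommRing M] [NoZeroDivisors M] (ψ : AddChar R M) {a b t : R}
    (ht : t * t = 0) (hat : a * t = 0) (hψ : ψ (b * t) ≠ 1) :
    ∑ u : Rˣ, ψ (a * u + b * ↑u⁻¹) = 0 := by
  have isUnit_add (u : Rˣ) : IsUnit ((u : R) + t) :=
    IsNilpotent.isUnit_add_left_of_commute ⟨2, by rw [sq, ht]⟩ u.isUnit (.all _ _)
  set shift : Rˣ → Rˣ := fun u => (isUnit_add u).unit
  have shift_bijective : shift.Bijective := Finite.injective_iff_bijective.mp fun u v huv => by
    simpa [shift, Units.ext_iff] using huv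
  have sum_eq_mul_self :
      ∑ u : Rˣ, ψ (a * ↑u⁻¹ + b * u) = ψ (b * t) * ∑ u : Rˣ, ψ (a * ↑u⁻¹ + b * u) := by
    rw [Finset.mul_sum]
    refine (Fintype.sum_bijective shift shift_bijective _ _ fun u => ?_).symm
    rw [Units.val_inv_of_val_eq_add_of_mul_self_eq_zero ht u (shift u) rfl,
      ← AddChar.map_add_eq_mul]
    congr 1
    simp only [shift, IsUnit.unit_spec]
    linear_combination ((↑u⁻¹ : R) * ↑u⁻¹) * hat
  rw [← Equiv.sum_comp (Equiv.inv Rˣ)]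
  simp only [Equiv.inv_apply, inv_inv]
  by_contra hne
  exact hψ (mul_right_cancel₀ hne (sum_eq_mul_self.symm.trans (one_mul _).symm))

lemma eC_intCast_div_s11 (k : ℤ) (c : ℕ) [NeZero c] :
    eC ((k / c : ℝ)) = ZMod.stdAddChar (k : ZMod c) := by
  rw [ZMod.stdAddChar_coe, eC]
  push_cast
  ring_nf

theorem Kl_eq_sum_units (m n : ℤ) {c : ℕ} [NeZero c] (hc : c ≠ 1) :
    Kl m n c = ∑ u : (ZMod c)ˣ,
      ZMod.stdAddChar ((m : ZMod c) * (u : ZMod c) + (n : ZMod c) * (↑u⁻¹ : ZMod c)) := by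
  refine Finset.sum_bij' (fun i hi => ZMod.unitOfCoprime i (Finset.mem_filter.mp hi).2)
    (fun u _ => (u : ZMod c).val) (fun _ _ => Finset.mem_univ _) (fun u _ => ?_) (fun i hi => ?_)
    (fun u _ => ?_) (fun i hi => ?_)
  · have : Nontrivial (ZMod c) := ZMod.nontrivial_iff.mpr hc
    simp only [Finset.mem_filter, Finset.mem_Icc]
    exact ⟨⟨Nat.one_le_iff_ne_zero.mpr ((ZMod.val_ne_zero _).mpr u.ne_zero), (ZMod.val_lt _).le⟩,
      ZMod.val_coe_unit_coprime u⟩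
  · simp only [Finset.mem_filter, Finset.mem_Icc] at hi
    obtain ⟨⟨-, hic⟩, hcop⟩ := hi
    have hne : i ≠ c := by rintro rfl; exact hc (by simpa using hcop)
    rw [ZMod.coe_unitOfCoprime, ZMod.val_natCast_of_lt (lt_of_le_of_ne hic hne)]
  · exact Units.ext (by simp)
  · rw [eC_intCast_div_s11]
    congr 1
    push_cast
    rw [ZMod.natCast_zmod_val, ← ZMod.inv_coe_unit, ZMod.coe_unitOfCoprime]

lemma natCast_div_mul_self_eq_zero {c p : ℕ} (h : p ^ 2 ∣ c) :
    ((c / p : ℕ) : ZMod c) * ((c / p : ℕ) : ZMod c) = 0 := by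
  obtain ⟨d, rfl⟩ := h
  rcases Nat.eq_zero_or_pos p with rfl | hp
  · simp
  rw [← Nat.cast_mul, ZMod.natCast_eq_zero_iff]
  refine ⟨d, ?_⟩
  rw [sq, mul_assoc, Nat.mul_div_cancel_left _ hp]
  ring

lemma intCast_mul_natCast_div_eq_zero_iff {c p : ℕ} (hc : c ≠ 0) (hpc : p ∣ c) (a : ℤ) :
    (a : ZMod c) * ((c / p : ℕ) : ZMod c) = 0 ↔ (p : ℤ) ∣ a := by
  obtain ⟨q, rfl⟩ := hpc
  have hp : p ≠ 0 := left_ne_zero_of_mul hc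
  have hq : (q : ℤ) ≠ 0 := by exact_mod_cast right_ne_zero_of_mul hc
  rw [Nat.mul_div_cancel_left _ (Nat.pos_of_ne_zero hp), ← Int.cast_natCast q, ← Int.cast_mul,
    ZMod.intCast_zmod_eq_zero_iff_dvd]
  push_cast
  exact mul_dvd_mul_iff_right hq

theorem stmt11_general (m n : ℤ) (c p : ℕ) (hc : 0 < c)
    (hp : p.Prime) (hpc : p ^ 2 ∣ c) (hpm : (p : ℤ) ∣ m) (hpn : ¬ (p : ℤ) ∣ n) :
    Kl m n c = 0 := by
  have : NeZero c := ⟨hc.ne'⟩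
  have hc1 : 1 < c := (Nat.one_lt_pow two_ne_zero hp.one_lt).trans_le (Nat.le_of_dvd hc hpc)
  have dvd_iff := intCast_mul_natCast_div_eq_zero_iff hc.ne' ((dvd_pow_self p two_ne_zero).trans hpc)
  rw [Kl_eq_sum_units m n hc1.ne']
  refine sum_units_addChar_mul_add_mul_inv_eq_zero _ (natCast_div_mul_self_eq_zero hpc)
    ((dvd_iff m).mpr hpm) fun h => hpn ((dvd_iff n).mp ?_)
  exact ZMod.injective_stdAddChar (h.trans (AddChar.map_zero_eq_one _).symm)

theorem stmt11 (m n : ℤ) (c p : ℕ) (hm : 0 < m) (hn : 0 < n) (hc : 0 < c)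
    (hp : p.Prime) (hpc : p ^ 2 ∣ c) (hpm : (p : ℤ) ∣ m) (hpn : ¬ (p : ℤ) ∣ n) :
    Kl m n c = 0 :=
  stmt11_general m n c p hc hp hpc hpm hpn
end
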